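/- For every z ∈ ℂ with essinf_ω |z − ζ(ω)| > 0, the adjoint of the transfer function satisfies M(z)* = M⁻(conj z), where M⁻ is the transfer function built from the conjugate contour datum. -/

import Mathlib

open MeasureTheory ContinuousLinearMap

/-- The analytically continued transfer function
`M(z) = Ã - z + ∫ z/(z-ζ(ω)) K(ω) dμ(ω)`. -/
noncomputable def Mtr {H : Type*} [NormedAddCommGroup H] [NormedSpace ℂ H] [CompleteSpace H]
    {Ω : Type*} [MeasurableSpace Ω] (μ : Measure Ω)
    (ζ : Ω → ℂ) (K : Ω → H →L[ℂ] H) (A : H →L[ℂ] H) (z : ℂ) : H →L[ℂ] H :=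
  A - z • (1 : H →L[ℂ] H) + ∫ ω, (z / (z - ζ ω)) • K ω ∂μ

theorem integral_star {Ω A : Type*} [MeasurableSpace Ω] {μ : Measure Ω} [NormedAddCommGroup A]
    [NormedSpace ℝ A] [CompleteSpace A] [StarAddMonoid A] [StarModule ℝ A] [ContinuousStar A]
    (f : Ω → A) : ∫ ω, star (f ω) ∂μ = star (∫ ω, f ω ∂μ) :=
  (starL' ℝ).integral_comp_comm f

theorem adjoint_transfer_function_general
    {H : Type*} [NormedAddCommGroup H] [InnerProductSpace ℂ H] [CompleteSpace H]
    {Ω : Type*} [MeasurableSpace Ω] (μ : Measure Ω)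
    (ζ : Ω → ℂ)
    (K : Ω → H →L[ℂ] H)
    (A : H →L[ℂ] H) (hA : IsSelfAdjoint A)
    (z : ℂ) :
    ContinuousLinearMap.adjoint (Mtr μ ζ K A z) =
      Mtr μ (fun ω => (starRingEnd ℂ) (ζ ω))
        (fun ω => ContinuousLinearMap.adjoint (K ω)) A ((starRingEnd ℂ) z) := by
  simp only [Mtr, ← star_eq_adjoint, star_add, star_sub, star_smul, star_one, hA.star_eq,
    ← integral_star]
  simp only [Complex.star_def, map_div₀, map_sub]

/-- Formula (4.12): `M(z)* = M⁻(z̄)`, where `M⁻` is the transfer function of the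
conjugate contour datum `(Ω, μ, conj ∘ ζ, adjoint ∘ K)`. -/
theorem adjoint_transfer_function
    {H : Type*} [NormedAddCommGroup H] [InnerProductSpace ℂ H] [CompleteSpace H]
    {Ω : Type*} [MeasurableSpace Ω] (μ : Measure Ω)
    (ζ : Ω → ℂ) (hζ : Measurable ζ)
    (K : Ω → H →L[ℂ] H) (hK : Integrable K μ)
    (A : H →L[ℂ] H) (hA : IsSelfAdjoint A)
    (z : ℂ) (hz : ∃ ε > (0 : ℝ), ∀ᵐ ω ∂μ, ε ≤ ‖z - ζ ω‖) :
    ContinuousLinearMap.adjoint (Mtr μ ζ K A z) =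
      Mtr μ (fun ω => (starRingEnd ℂ) (ζ ω))
        (fun ω => ContinuousLinearMap.adjoint (K ω)) A ((starRingEnd ℂ) z) :=
  adjoint_transfer_function_general μ ζ K A hA z
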